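/- The 1-form λ on ℝ⁴ is a primitive of ω_A: for every p ∈ ℝ⁴ and all u,v ∈ ℝ⁴, (fderiv λ p u)(v) − (fderiv λ p v)(u) = ω_A(p)(u,v); that is, dλ = ω_A. -/

import Mathlib

/-!
The coefficients of λ are quadratic in the base point, so `fderiv λ p u` is the coefficient of `t`
in the polynomial `t ↦ λ(p + t • u)`; antisymmetrizing these coefficients in `u` and `v` gives ω_A.
-/

noncomputable section

/-- The 1-form λ = −½(x₁²+x₂²−2x₃²)dθ + x₂x₃dx₁ − x₁x₃dx₂ on ℝ⁴. -/
def lamA (p v : Fin 4 → ℝ) : ℝ :=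
  -(1 / 2) * (p 1 ^ 2 + p 2 ^ 2 - 2 * p 3 ^ 2) * v 0 + p 2 * p 3 * v 1 - p 1 * p 3 * v 2

/-- The 2-form ω_A = x₁(dθ∧dx₁+dx₂∧dx₃) + x₂(dθ∧dx₂+dx₃∧dx₁) − 2x₃(dθ∧dx₃+dx₁∧dx₂). -/
def omegaA (p u v : Fin 4 → ℝ) : ℝ :=
  p 1 * (u 0 * v 1 - u 1 * v 0 + u 2 * v 3 - u 3 * v 2)
  + p 2 * (u 0 * v 2 - u 2 * v 0 + u 3 * v 1 - u 1 * v 3)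
  + (-2 * p 3) * (u 0 * v 3 - u 3 * v 0 + u 1 * v 2 - u 2 * v 1)

theorem DifferentiableAt.fderiv_apply_eq_of_line_quadratic {E : Type*} [NormedAddCommGroup E]
    [NormedSpace ℝ E] {f : E → ℝ} {p u : E} (hf : DifferentiableAt ℝ f p) {a b c : ℝ}
    (hline : ∀ t : ℝ, f (p + t • u) = a + b * t + c * t ^ 2) :
    fderiv ℝ f p u = b := by
  rw [← hf.lineDeriv_eq_fderiv, lineDeriv, funext hline]
  have hpoly := (((hasDerivAt_id (0 : ℝ)).const_mul b).const_add a).fun_add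
    ((hasDerivAt_pow 2 (0 : ℝ)).const_mul c)
  simpa using hpoly.deriv

theorem fderiv_lamA_apply (p u v : Fin 4 → ℝ) :
    fderiv ℝ (fun q => lamA q v) p u
      = -(p 1 * u 1 + p 2 * u 2 - 2 * p 3 * u 3) * v 0
        + (p 2 * u 3 + p 3 * u 2) * v 1 - (p 1 * u 3 + p 3 * u 1) * v 2 := by
  have hdiff : DifferentiableAt ℝ (fun q => lamA q v) p := by
    unfold lamA
    fun_prop
  refine hdiff.fderiv_apply_eq_of_line_quadratic (a := lamA p v) (c := lamA u v) fun t => ?_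
  simp only [lamA, Pi.add_apply, Pi.smul_apply, smul_eq_mul]
  ring

/-- λ is a primitive of ω_A: dλ = ω_A. -/
theorem dlambda_eq_omegaA :
    ∀ p u v : Fin 4 → ℝ,
      fderiv ℝ (fun q => lamA q v) p u - fderiv ℝ (fun q => lamA q u) p v
        = omegaA p u v := by
  intro p u v
  rw [fderiv_lamA_apply, fderiv_lamA_apply, omegaA]
  ring
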